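/- arXiv:2411.06913 — 8 statements merged into one kernel-verified Lean document; each statement's English description precedes it below -/
import Mathlib

section
/- Suppose Y = ⟨θ*, Φ(X)⟩ + G holds almost surely, where θ* ∈ ℝ^{d_Φ}, d_Φ ≤ d_Z. Assume (B2*): Cov(G, Z_i) = 0 for all i, and (B1*): the d_Φ × d_Z matrix β_Φ with entries (β_Φ)_{ji} = Cov(Φ_j(X), Z_i) has rank d_Φ. Then θ* is the unique vector θ ∈ ℝ^{d_Φ} satisfying Cov(Y, Z_i) − Σ_{j=1}^{d_Φ} θ_j · Cov(Φ_j(X), Z_i) = 0 for all i ∈ {1,…,d_Z}. -/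
open MeasureTheory

/-- Covariance of two real-valued random variables. -/
noncomputable def cov {Ω : Type*} [MeasurableSpace Ω] (μ : Measure Ω) (f g : Ω → ℝ) : ℝ :=
  ∫ ω, (f ω - ∫ ω', f ω' ∂μ) * (g ω - ∫ ω', g ω' ∂μ) ∂μ

section aux

variable {Ω : Type*} [MeasurableSpace Ω] {μ : Measure Ω} [IsProbabilityMeasure μ]

lemma integrable_mul_of_memL2 {f g : Ω → ℝ} (hf : MemLp f 2 μ) (hg : MemLp g 2 μ) :
    Integrable (fun ω => f ω * g ω) μ := by
  have h : MemLp (f • g) 1 μ := by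
    exact hg.smul hf
  exact memLp_one_iff_integrable.mp h

lemma cov_congr {f f' g : Ω → ℝ} (h : f =ᵐ[μ] f') : cov μ f g = cov μ f' g := by
  unfold cov
  rw [integral_congr_ae h]
  refine integral_congr_ae ?_
  filter_upwards [h] with ω hω
  rw [hω]

lemma cov_smul (c : ℝ) (f g : Ω → ℝ) :
    cov μ (fun ω => c * f ω) g = c * cov μ f g := by
  unfold cov
  rw [MeasureTheory.integral_const_mul,
    ← MeasureTheory.integral_const_mul c
      (fun ω => (f ω - ∫ ω', f ω' ∂μ) * (g ω - ∫ ω', g ω' ∂μ))]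
  refine integral_congr_ae (Filter.Eventually.of_forall fun ω => ?_)
  ring

lemma cov_add {f f' g : Ω → ℝ} (hf : MemLp f 2 μ) (hf' : MemLp f' 2 μ) (hg : MemLp g 2 μ) :
    cov μ (fun ω => f ω + f' ω) g = cov μ f g + cov μ f' g := by
  unfold cov
  have hfi : Integrable f μ := hf.integrable (by norm_num)
  have hfi' : Integrable f' μ := hf'.integrable (by norm_num)
  rw [integral_add hfi hfi']
  have h1 : Integrable (fun ω => (f ω - ∫ ω', f ω' ∂μ) * (g ω - ∫ ω', g ω' ∂μ)) μ :=
    integrable_mul_of_memL2 (hf.sub (memLp_const _)) (hg.sub (memLp_const _))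
  have h2 : Integrable (fun ω => (f' ω - ∫ ω', f' ω' ∂μ) * (g ω - ∫ ω', g ω' ∂μ)) μ :=
    integrable_mul_of_memL2 (hf'.sub (memLp_const _)) (hg.sub (memLp_const _))
  rw [← integral_add h1 h2]
  congr 1 with ω
  ring

lemma cov_zero (g : Ω → ℝ) : cov μ (fun _ => (0 : ℝ)) g = 0 := by
  unfold cov
  simp

lemma cov_sum {ι : Type*} (s : Finset ι) (f : ι → Ω → ℝ) (g : Ω → ℝ)
    (hf : ∀ i ∈ s, MemLp (f i) 2 μ) (hg : MemLp g 2 μ) :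
    cov μ (fun ω => ∑ i ∈ s, f i ω) g = ∑ i ∈ s, cov μ (f i) g := by
  classical
  induction s using Finset.induction_on with
  | empty => simpa using cov_zero (μ := μ) g
  | insert a s hnotmem ih =>
    rw [Finset.sum_insert hnotmem]
    have hmem : ∀ i ∈ s, MemLp (f i) 2 μ := fun i hi => hf i (Finset.mem_insert_of_mem hi)
    have hadd : cov μ (fun ω => f a ω + ∑ i ∈ s, f i ω) g
        = cov μ (f a) g + cov μ (fun ω => ∑ i ∈ s, f i ω) g :=
      cov_add (hf a (Finset.mem_insert_self a s)) (memLp_finset_sum s hmem) hg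
    have hfun : (fun ω => ∑ i ∈ insert a s, f i ω) = fun ω => f a ω + ∑ i ∈ s, f i ω := by
      funext ω; rw [Finset.sum_insert hnotmem]
    rw [hfun, hadd, ih hmem]

end aux

/-- Identifiability: under (B1*) (the cross-covariance matrix `β_Φ` has full
row rank `d_Φ`) and (B2*) (`Cov(G, Z i) = 0` for all `i`), the causal parameter `θ*` is the
unique solution `θ` of `Cov(Y, Z i) − ∑ j, θ_j · Cov(Φ_j(X), Z i) = 0` for all `i`. -/
theorem point_identifiability
    {Ω 𝓧 : Type*} [MeasurableSpace Ω] [MeasurableSpace 𝓧]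
    (μ : Measure Ω) [IsProbabilityMeasure μ]
    {dZ dΦ : ℕ} (hdim : dΦ ≤ dZ)
    (Z : Fin dZ → Ω → ℝ) (X : Ω → 𝓧) (Φ : Fin dΦ → 𝓧 → ℝ)
    (Y G : Ω → ℝ) (θstar : Fin dΦ → ℝ)
    (hX : Measurable X) (hΦ : ∀ j, Measurable (Φ j))
    (hY : MemLp Y 2 μ) (hΦX : ∀ j, MemLp (fun ω => Φ j (X ω)) 2 μ)
    (hG : MemLp G 2 μ) (hZ : ∀ i, MemLp (Z i) 2 μ)
    (hstruct : ∀ᵐ ω ∂μ, Y ω = (∑ j, θstar j * Φ j (X ω)) + G ω)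
    (hB2 : ∀ i, cov μ G (Z i) = 0)
    (hB1 : Matrix.rank (Matrix.of fun (j : Fin dΦ) (i : Fin dZ) =>
      cov μ (fun ω => Φ j (X ω)) (Z i)) = dΦ) :
    ∀ θ : Fin dΦ → ℝ,
      (∀ i, cov μ Y (Z i) - ∑ j, θ j * cov μ (fun ω => Φ j (X ω)) (Z i) = 0) ↔ θ = θstar := by
  set M : Matrix (Fin dΦ) (Fin dZ) ℝ :=
    Matrix.of fun (j : Fin dΦ) (i : Fin dZ) => cov μ (fun ω => Φ j (X ω)) (Z i) with hM
  -- Step A: cov μ Y (Z i) = ∑ j, θstar j * M j i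
  have hA : ∀ i, cov μ Y (Z i) = ∑ j, θstar j * M j i := by
    intro i
    have h1 : cov μ Y (Z i) =
        cov μ (fun ω => (∑ j, θstar j * Φ j (X ω)) + G ω) (Z i) :=
      cov_congr hstruct
    have hsum : MemLp (fun ω => ∑ j, θstar j * Φ j (X ω)) 2 μ :=
      memLp_finset_sum _ fun j _ => (hΦX j).const_mul _
    have h2 : cov μ (fun ω => (∑ j, θstar j * Φ j (X ω)) + G ω) (Z i)
        = cov μ (fun ω => ∑ j, θstar j * Φ j (X ω)) (Z i) + cov μ G (Z i) :=
      cov_add hsum hG (hZ i)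
    have h3 : cov μ (fun ω => ∑ j, θstar j * Φ j (X ω)) (Z i)
        = ∑ j, cov μ (fun ω => θstar j * Φ j (X ω)) (Z i) :=
      cov_sum Finset.univ (fun j ω => θstar j * Φ j (X ω)) (Z i)
        (fun j _ => (hΦX j).const_mul _) (hZ i)
    rw [h1, h2, h3, hB2 i, add_zero]
    refine Finset.sum_congr rfl fun j _ => ?_
    rw [cov_smul]
    rfl
  -- Rank argument: the map v ↦ Mᵀ *ᵥ v is injective
  have hker : ∀ v : Fin dΦ → ℝ, (Matrix.transpose M).mulVec v = 0 → v = 0 := by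
    intro v hv
    have hrank : (Matrix.transpose M).rank = dΦ := by rw [Matrix.rank_transpose]; exact hB1
    have hfr := LinearMap.finrank_range_add_finrank_ker ((Matrix.transpose M).mulVecLin)
    have hr2 : Module.finrank ℝ (LinearMap.range (Matrix.transpose M).mulVecLin) = dΦ := hrank
    rw [hr2, Module.finrank_fin_fun] at hfr
    have hk0 : Module.finrank ℝ (LinearMap.ker (Matrix.transpose M).mulVecLin) = 0 := by omega
    have hbot : LinearMap.ker (Matrix.transpose M).mulVecLin = ⊥ := Submodule.finrank_eq_zero.mp hk0
    have : v ∈ LinearMap.ker (Matrix.transpose M).mulVecLin := by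
      rw [LinearMap.mem_ker, Matrix.mulVecLin_apply]
      exact hv
    rw [hbot] at this
    simpa using this
  have hcov : ∀ i j, cov μ (fun ω => Φ j (X ω)) (Z i) = M j i := fun _ _ => rfl
  intro θ
  constructor
  · intro hθ
    have hθ' : ∀ i, ∑ j, (θ j - θstar j) * M j i = 0 := by
      intro i
      have h := hθ i
      rw [hA i] at h
      simp only [hcov] at h
      have hsplit : ∑ j, (θ j - θstar j) * M j i
          = ∑ j, θ j * M j i - ∑ j, θstar j * M j i := by
        rw [← Finset.sum_sub_distrib]
        exact Finset.sum_congr rfl fun j _ => by ring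
      rw [hsplit]
      linarith
    have hv : (Matrix.transpose M).mulVec (θ - θstar) = 0 := by
      funext i
      simp only [Matrix.mulVec, dotProduct, Matrix.transpose_apply, Pi.sub_apply,
        Pi.zero_apply]
      rw [← hθ' i]
      exact Finset.sum_congr rfl fun j _ => by ring
    have h0 := hker _ hv
    funext j
    have := congrFun h0 j
    simp only [Pi.sub_apply, Pi.zero_apply] at this
    linarith
  · intro hθ
    subst hθ
    intro i
    rw [hA i]
    simp only [hcov]
    exact sub_self _
end

section
/- (Tightness of the cardinality bound in the scalar case.) For every d_Z ≥ 1 and every natural number b with b < d_Z, there exist a vector β_Φ ∈ ℝ^{d_Z} with every entry nonzero and a vector β_y ∈ ℝ^{d_Z} such that the set {θ ∈ ℝ : #{i ∈ {1,…,d_Z} : (β_y)_i − θ·(β_Φ)_i ≠ 0} ≤ b} has cardinality exactly ⌊d_Z/(d_Z − b)⌋. -/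
private lemma fin_filter_card (n : ℕ) (p : ℕ → Prop) [DecidablePred p] :
    (Finset.univ.filter (fun i : Fin n => p i.val)).card
      = ((Finset.range n).filter p).card := by
  apply Finset.card_bij (fun i _ => i.val)
  · intro a ha
    simp only [Finset.mem_filter, Finset.mem_range, Finset.mem_univ] at *
    exact ⟨a.isLt, ha.2⟩
  · intro a _ b _ h; exact Fin.val_injective h
  · intro c hc
    simp only [Finset.mem_filter, Finset.mem_range] at hc
    exact ⟨⟨c, hc.1⟩, by simp [hc.2], rfl⟩

private lemma div_eq_iff' {m : ℕ} (hm : 0 < m) (n j : ℕ) :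
    n / m = j ↔ j * m ≤ n ∧ n < (j + 1) * m := by
  constructor
  · rintro rfl
    refine ⟨Nat.div_mul_le_self n m, ?_⟩
    have e := Nat.div_add_mod n m
    have hlt := Nat.mod_lt n hm
    nlinarith
  · rintro ⟨h1, h2⟩
    exact Nat.div_eq_of_lt_le h1 h2

/-- Tightness of the cardinality bound in the scalar case: for every `d_Z ≥ 1`
and `b < d_Z`, there exist `β_Φ` (all entries nonzero) and `β_y` in `ℝ^{d_Z}` such that
`{θ : ‖β_y − θ·β_Φ‖₀ ≤ b}` has cardinality exactly `⌊d_Z/(d_Z − b)⌋`. -/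
theorem t_point_bound_tight_scalar
    (dZ : ℕ) (hdZ : 1 ≤ dZ) (b : ℕ) (hb : b < dZ) :
    ∃ (βΦ βy : Fin dZ → ℝ),
      (∀ i, βΦ i ≠ 0) ∧
      Set.ncard {θ : ℝ | Set.ncard {i : Fin dZ | βy i - θ * βΦ i ≠ 0} ≤ b}
        = dZ / (dZ - b) := by
  set m := dZ - b with hm_def
  have hm : 0 < m := by omega
  set k := dZ / m with hk_def
  have hkm : k * m ≤ dZ := Nat.div_mul_le_self dZ m
  have hkm2 : dZ < (k + 1) * m := by
    have := (div_eq_iff' hm dZ k).mp rfl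
    exact this.2
  refine ⟨fun _ => 1, fun i => ((i.val / m : ℕ) : ℝ), fun _ => one_ne_zero, ?_⟩
  -- the count of indices whose value equals θ
  classical
  -- nat-level count for a given j
  have hcnt : ∀ j : ℕ, ((Finset.range dZ).filter (fun n => n / m = j)).card
      = min ((j + 1) * m) dZ - j * m := by
    intro j
    have : (Finset.range dZ).filter (fun n => n / m = j)
        = Finset.Ico (j * m) (min ((j + 1) * m) dZ) := by
      ext n
      simp only [Finset.mem_filter, Finset.mem_range, Finset.mem_Ico, lt_min_iff,
        div_eq_iff' hm]
      tauto
    rw [this, Nat.card_Ico]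
  -- identify the condition set
  have hset : {θ : ℝ | Set.ncard {i : Fin dZ | ((i.val / m : ℕ) : ℝ) - θ * 1 ≠ 0} ≤ b}
      = (fun j : ℕ => (j : ℝ)) '' Set.Iio k := by
    ext θ
    simp only [Set.mem_setOf_eq, Set.mem_image, Set.mem_Iio]
    -- rewrite the inner ncard
    have hinner : Set.ncard {i : Fin dZ | ((i.val / m : ℕ) : ℝ) - θ * 1 ≠ 0}
        = dZ - (Finset.univ.filter (fun i : Fin dZ => ((i.val / m : ℕ) : ℝ) = θ)).card := by
      rw [Set.ncard_eq_toFinset_card']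
      have h1 : {i : Fin dZ | ((i.val / m : ℕ) : ℝ) - θ * 1 ≠ 0}.toFinset
          = Finset.univ.filter (fun i : Fin dZ => ¬ (((i.val / m : ℕ) : ℝ) = θ)) := by
        ext i
        simp [sub_eq_zero]
      rw [h1]
      have := Finset.card_filter_add_card_filter_not
        (s := (Finset.univ : Finset (Fin dZ)))
        (p := fun i : Fin dZ => ((i.val / m : ℕ) : ℝ) = θ)
      simp only [Finset.card_univ, Fintype.card_fin] at this
      omega
    rw [hinner]
    have hle : (Finset.univ.filter (fun i : Fin dZ => ((i.val / m : ℕ) : ℝ) = θ)).card ≤ dZ := by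
      calc _ ≤ (Finset.univ : Finset (Fin dZ)).card := Finset.card_filter_le _ _
        _ = dZ := by simp
    constructor
    · intro h
      have hz : m ≤ (Finset.univ.filter (fun i : Fin dZ => ((i.val / m : ℕ) : ℝ) = θ)).card := by
        omega
      have hne : (Finset.univ.filter (fun i : Fin dZ => ((i.val / m : ℕ) : ℝ) = θ)).Nonempty := by
        rw [← Finset.card_pos]; omega
      obtain ⟨i, hi⟩ := hne
      simp only [Finset.mem_filter, Finset.mem_univ, true_and] at hi
      refine ⟨i.val / m, ?_, hi⟩
      by_contra hjk
      push_neg at hjk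
      set j := i.val / m with hj_def
      -- then the count is at most dZ - j*m < m, contradiction
      have hcard : (Finset.univ.filter (fun i' : Fin dZ => ((i'.val / m : ℕ) : ℝ) = θ)).card
          = min ((j + 1) * m) dZ - j * m := by
        rw [← hcnt j, ← fin_filter_card dZ (fun n => n / m = j)]
        apply Finset.card_bij (fun i _ => i)
        · intro a ha
          simp only [Finset.mem_filter, Finset.mem_univ, true_and] at *
          rw [← hi] at ha
          exact_mod_cast ha
        · intro a b _ _ h; exact h
        · intro c hc
          simp only [Finset.mem_filter, Finset.mem_univ, true_and] at hc
          exact ⟨c, by simp [hc, ← hi], rfl⟩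
      -- j ≥ k, so count < m
      have hjm : k * m ≤ j * m := Nat.mul_le_mul_right m hjk
      have : min ((j + 1) * m) dZ - j * m < m := by
        have h1 : min ((j + 1) * m) dZ ≤ dZ := min_le_right _ _
        have h2 : dZ < k * m + m := by nlinarith
        omega
      omega
    · rintro ⟨j, hj, rfl⟩
      -- count is exactly m
      have hcard : (Finset.univ.filter (fun i : Fin dZ => ((i.val / m : ℕ) : ℝ) = (j : ℝ))).card
          = min ((j + 1) * m) dZ - j * m := by
        rw [← hcnt j, ← fin_filter_card dZ (fun n => n / m = j)]
        congr 1
        ext i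
        simp [Nat.cast_inj]
      have hjm : (j + 1) * m ≤ dZ := by
        calc (j + 1) * m ≤ k * m := Nat.mul_le_mul_right m hj
          _ ≤ dZ := hkm
      rw [hcard, min_eq_left hjm]
      have : (j + 1) * m - j * m = m := by
        have : (j + 1) * m = j * m + m := by ring
        omega
      omega
  rw [hset, Set.ncard_image_of_injective _ Nat.cast_injective,
    ← Finset.coe_range, Set.ncard_coe_finset, Finset.card_range]
end

section
/- (No point identification for d_Φ > 1.) For every d_Φ ≥ 2, every d_Z ≥ d_Φ, and every natural number b with 1 ≤ b ≤ d_Z, there exist a d_Φ × d_Z real matrix β_Φ of rank d_Φ with all columns nonzero and a vector β_y ∈ ℝ^{d_Z} such that the feasible set {θ ∈ ℝ^{d_Φ} : #{i : h(θ)_i ≠ 0} ≤ b} contains at least two distinct elements. Hence no choice of b guarantees point identification when d_Φ > 1. -/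
/-- No point identification for `d_Φ > 1`: for every `d_Φ ≥ 2`, `d_Z ≥ d_Φ`
and `1 ≤ b ≤ d_Z`, there exist a rank-`d_Φ` matrix `β_Φ` with all columns nonzero and a
vector `β_y` such that the feasible set `{θ : ‖h(θ)‖₀ ≤ b}` contains two distinct points. -/
theorem no_point_identification_multivariate
    (dΦ dZ b : ℕ) (hdΦ : 2 ≤ dΦ) (hdZ : dΦ ≤ dZ) (hb1 : 1 ≤ b) (hb2 : b ≤ dZ) :
    ∃ (βΦ : Matrix (Fin dΦ) (Fin dZ) ℝ) (βy : Fin dZ → ℝ),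
      βΦ.rank = dΦ ∧
      (∀ i : Fin dZ, (fun j => βΦ j i) ≠ 0) ∧
      ∃ θ₁ θ₂ : Fin dΦ → ℝ, θ₁ ≠ θ₂ ∧
        Set.ncard {i : Fin dZ | βy i - ∑ j, θ₁ j * βΦ j i ≠ 0} ≤ b ∧
        Set.ncard {i : Fin dZ | βy i - ∑ j, θ₂ j * βΦ j i ≠ 0} ≤ b := by
  have h1Φ : 1 < dΦ := hdΦ
  have h1Z : 1 < dZ := lt_of_lt_of_le h1Φ hdZ
  -- f i : which basis vector column i is
  set f : Fin dZ → Fin dΦ := fun i => if h : i.val < dΦ then ⟨i.val, h⟩ else ⟨0, by omega⟩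
    with hf
  set A : Matrix (Fin dΦ) (Fin dZ) ℝ := fun j i => if j = f i then 1 else 0 with hA
  refine ⟨A, 0, ?_, ?_, ?_⟩
  · -- rank
    apply le_antisymm
    · simpa using A.rank_le_card_height
    · set B : Matrix (Fin dZ) (Fin dΦ) ℝ := fun i j => if i.val = j.val then 1 else 0 with hB
      have hAB : A * B = 1 := by
        ext j k
        simp only [Matrix.mul_apply, Matrix.one_apply]
        simp only [hA, hB]
        rw [Finset.sum_eq_single (⟨k.val, lt_of_lt_of_le k.isLt hdZ⟩ : Fin dZ)]
        · have hfk : f ⟨k.val, lt_of_lt_of_le k.isLt hdZ⟩ = k := by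
            simp [hf, k.isLt]
          simp [hfk]
        · intro i _ hi
          have : ¬ i.val = k.val := fun h => hi (by ext; simpa using h)
          simp [this]
        · simp
      have := Matrix.rank_mul_le_left A B
      rw [hAB, Matrix.rank_one] at this
      simpa using this
  · intro i h
    have := congrFun h (f i)
    simp [hA] at this
  · refine ⟨0, (fun j => if j = ⟨1, h1Φ⟩ then 1 else 0), ?_, ?_, ?_⟩
    · intro h
      have := congrFun h.symm ⟨1, h1Φ⟩
      simp at this
    · have : {i : Fin dZ | (0:Fin dZ → ℝ) i - ∑ j, (0:Fin dΦ → ℝ) j * A j i ≠ 0} = ∅ := by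
        ext i; simp
      rw [this]; simp
    · have hset : {i : Fin dZ | (0:Fin dZ → ℝ) i - ∑ j, (if j = (⟨1, h1Φ⟩ : Fin dΦ) then (1:ℝ) else 0) * A j i ≠ 0}
          = {(⟨1, h1Z⟩ : Fin dZ)} := by
        ext i
        simp only [Set.mem_setOf_eq, Set.mem_singleton_iff, Pi.zero_apply]
        rw [Finset.sum_eq_single (⟨1, h1Φ⟩ : Fin dΦ)]
        · constructor
          · intro h
            simp only [if_pos rfl, one_mul, hA] at h
            by_cases hc : (⟨1, h1Φ⟩ : Fin dΦ) = f i
            · have : i.val = 1 := by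
                by_cases hi : i.val < dΦ
                · have := congrArg Fin.val hc
                  simpa [hf, hi] using this.symm
                · exfalso
                  have := congrArg Fin.val hc
                  simp [hf, hi] at this
              exact Fin.ext this
            · simp [hc] at h
          · intro h
            subst h
            have hfi : f ⟨1, h1Z⟩ = ⟨1, h1Φ⟩ := by simp [hf, h1Φ]
            simp [hA, hfi]
        · intro j _ hj; simp [hj]
        · simp
      rw [hset]
      simpa using hb1
end

section
/- (t-point identification for d_Φ = 1.) Let β_Φ ∈ ℝ^{d_Z} have every entry nonzero, let β_y ∈ ℝ^{d_Z}, and let b ∈ ℕ with b < d_Z. Then the set T := {θ ∈ ℝ : #{i ∈ {1,…,d_Z} : (β_y)_i − θ·(β_Φ)_i ≠ 0} ≤ b} is finite with cardinality at most ⌊d_Z/(d_Z − b)⌋, which in turn is at most d_Z. -/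
/-- t-point identification for `d_Φ = 1`: if every entry of `β_Φ ∈ ℝ^{d_Z}` is
nonzero and `b < d_Z`, then `T = {θ ∈ ℝ : ‖β_y − θ·β_Φ‖₀ ≤ b}` is finite with cardinality at
most `⌊d_Z/(d_Z − b)⌋`, which is at most `d_Z`. -/
theorem t_point_identification_scalar
    {dZ : ℕ} (βΦ βy : Fin dZ → ℝ) (hβΦ : ∀ i, βΦ i ≠ 0)
    (b : ℕ) (hb : b < dZ) :
    (let T : Set ℝ := {θ | Set.ncard {i : Fin dZ | βy i - θ * βΦ i ≠ 0} ≤ b}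
    T.Finite ∧ T.ncard ≤ dZ / (dZ - b) ∧ dZ / (dZ - b) ≤ dZ) := by
  intro T
  have hpos : 0 < dZ - b := Nat.sub_pos_of_lt hb
  classical
  set Z : ℝ → Finset (Fin dZ) :=
    fun θ => Finset.univ.filter (fun i => βy i - θ * βΦ i = 0) with hZ
  have hcard : ∀ θ ∈ T, dZ - b ≤ (Z θ).card := by
    intro θ hθ
    have h1 : {i : Fin dZ | βy i - θ * βΦ i ≠ 0}.ncard ≤ b := hθ
    have h2 : (Finset.univ.filter (fun i : Fin dZ => ¬ (βy i - θ * βΦ i = 0))).card ≤ b := by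
      have := Set.ncard_eq_toFinset_card' {i : Fin dZ | βy i - θ * βΦ i ≠ 0}
      rw [this] at h1
      convert h1 using 2
      simp [Set.toFinset_setOf]
    have h3 := Finset.card_filter_add_card_filter_not
      (s := (Finset.univ : Finset (Fin dZ))) (p := fun i => βy i - θ * βΦ i = 0)
    simp only [Finset.card_univ, Fintype.card_fin] at h3
    simp only [hZ]
    omega
  have hne : ∀ θ ∈ T, (Z θ).Nonempty := by
    intro θ hθ
    rw [← Finset.card_pos]
    exact lt_of_lt_of_le hpos (hcard θ hθ)
  have hsub : T ⊆ Set.range (fun i : Fin dZ => βy i / βΦ i) := by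
    intro θ hθ
    obtain ⟨i, hi⟩ := hne θ hθ
    simp only [hZ, Finset.mem_filter] at hi
    refine ⟨i, ?_⟩
    have : βy i = θ * βΦ i := by linarith [hi.2]
    simp only [this, mul_div_assoc, div_self (hβΦ i), mul_one]
  have hfin : T.Finite := Set.Finite.subset (Set.finite_range _) hsub
  have hdisj : ∀ θ₁ ∈ hfin.toFinset, ∀ θ₂ ∈ hfin.toFinset, θ₁ ≠ θ₂ →
      Disjoint (Z θ₁) (Z θ₂) := by
    intro θ₁ _ θ₂ _ hne12
    rw [Finset.disjoint_left]
    intro i hi1 hi2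
    simp only [hZ, Finset.mem_filter] at hi1 hi2
    exact hne12 (by
      have h1 := hi1.2
      have h2 := hi2.2
      have : (θ₁ - θ₂) * βΦ i = 0 := by ring_nf; linarith
      rcases mul_eq_zero.mp this with h | h
      · linarith
      · exact absurd h (hβΦ i))
  have hbi : (hfin.toFinset.biUnion Z).card = ∑ θ ∈ hfin.toFinset, (Z θ).card :=
    Finset.card_biUnion hdisj
  have hle : hfin.toFinset.card * (dZ - b) ≤ dZ := by
    calc hfin.toFinset.card * (dZ - b) = ∑ _θ ∈ hfin.toFinset, (dZ - b) := by
          simp [Finset.sum_const, Nat.mul_comm]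
      _ ≤ ∑ θ ∈ hfin.toFinset, (Z θ).card :=
          Finset.sum_le_sum (fun θ hθ => hcard θ (by simpa using hθ))
      _ = (hfin.toFinset.biUnion Z).card := hbi.symm
      _ ≤ Fintype.card (Fin dZ) := Finset.card_le_univ _
      _ = dZ := Fintype.card_fin _
  have hncard : T.ncard = hfin.toFinset.card := Set.ncard_eq_toFinset_card T hfin
  refine ⟨hfin, ?_, Nat.div_le_self _ _⟩
  rw [hncard]
  exact Nat.le_div_iff_mul_le hpos |>.mpr hle
end

section
/- (Point identification under a majority of valid instruments, d_Φ = 1.) Let β_Φ ∈ ℝ^{d_Z} have every entry nonzero, let β_y ∈ ℝ^{d_Z}, and let b ∈ ℕ with 2b < d_Z. Then the set {θ ∈ ℝ : #{i ∈ {1,…,d_Z} : (β_y)_i − θ·(β_Φ)_i ≠ 0} ≤ b} contains at most one element. -/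
/-- Point identification with a majority of valid instruments, `d_Φ = 1`: if
every entry of `β_Φ ∈ ℝ^{d_Z}` is nonzero and `2b < d_Z`, then
`{θ ∈ ℝ : ‖β_y − θ·β_Φ‖₀ ≤ b}` contains at most one element. -/
theorem point_identification_majority_scalar
    {dZ : ℕ} (βΦ βy : Fin dZ → ℝ) (hβΦ : ∀ i, βΦ i ≠ 0)
    (b : ℕ) (hb : 2 * b < dZ) :
    Set.Subsingleton {θ : ℝ | Set.ncard {i : Fin dZ | βy i - θ * βΦ i ≠ 0} ≤ b} := by
  intro θ₁ h₁ θ₂ h₂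
  by_contra hne
  have hsub : (Set.univ : Set (Fin dZ)) ⊆
      {i : Fin dZ | βy i - θ₁ * βΦ i ≠ 0} ∪ {i : Fin dZ | βy i - θ₂ * βΦ i ≠ 0} := by
    intro i _
    by_contra hi
    simp only [Set.mem_union, Set.mem_setOf_eq, not_or, not_not] at hi
    obtain ⟨e1, e2⟩ := hi
    apply hne
    have : θ₁ * βΦ i = θ₂ * βΦ i := by linarith
    exact mul_right_cancel₀ (hβΦ i) this
  have hcard : dZ ≤ Set.ncard ({i : Fin dZ | βy i - θ₁ * βΦ i ≠ 0}
      ∪ {i : Fin dZ | βy i - θ₂ * βΦ i ≠ 0}) := by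
    have := Set.ncard_le_ncard hsub (Set.toFinite _)
    simpa [Set.ncard_univ] using this
  have := Set.ncard_union_le {i : Fin dZ | βy i - θ₁ * βΦ i ≠ 0}
      {i : Fin dZ | βy i - θ₂ * βΦ i ≠ 0}
  simp only [Set.mem_setOf_eq] at h₁ h₂
  omega
end

section
/- (Cuboid decomposition of the budget constraint set.) Let Σ_b^{(max)} be the set of assignments U : {1,…,d_Z} → {1,…,K+1} such that for every ℓ ∈ {1,…,K}, #{i : U(i) ≤ ℓ} = b_ℓ. Then for every γ ∈ ℝ^{d_Z}: γ ∈ Γ(τ,b) if and only if there exists U ∈ Σ_b^{(max)} such that |γ_i| ≤ τ_{U(i)} for every index i with U(i) ≤ K (indices with U(i) = K+1 are unconstrained). In other words, Γ(τ,b) equals the union over U ∈ Σ_b^{(max)} of the (possibly unbounded) axis-aligned cuboids {γ : ∀ i with U(i) ≤ K, |γ_i| ≤ τ_{U(i)}}. -/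
/-- The budget constraint set `Γ(τ, b)`: vectors `γ ∈ ℝ^{d_Z}` such that, for every level
`ℓ`, at least `b ℓ` components satisfy `|γ_i| ≤ τ ℓ`. -/
def budgetSet (dZ K : ℕ) (τ : Fin K → ℝ) (b : Fin K → ℕ) : Set (Fin dZ → ℝ) :=
  {γ | ∀ ℓ : Fin K, b ℓ ≤ Set.ncard {i : Fin dZ | |γ i| ≤ τ ℓ}}

lemma ncard_setOf_eq_card_filter {n : ℕ} (P : Fin n → Prop) [DecidablePred P] :
    Set.ncard {i | P i} = (Finset.univ.filter P).card := by
  rw [← Set.ncard_coe_finset]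
  congr 1
  ext i
  simp

lemma card_filter_val_lt (n m : ℕ) (h : m ≤ n) :
    (Finset.univ.filter fun j : Fin n => (j : ℕ) < m).card = m := by
  have heq : (Finset.univ.filter fun j : Fin n => (j : ℕ) < m)
      = (Finset.range m).attachFin
        (fun a ha => lt_of_lt_of_le (Finset.mem_range.mp ha) h) := by
    ext j
    simp [Finset.mem_attachFin]
  rw [heq, Finset.card_attachFin, Finset.card_range]

lemma mem_of_downclosed {n : ℕ} (A : Finset (Fin n))
    (hdc : ∀ k ∈ A, ∀ k' : Fin n, k' ≤ k → k' ∈ A)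
    (m : ℕ) (hcard : m ≤ A.card) (j : Fin n) (hj : (j : ℕ) < m) : j ∈ A := by
  by_contra hjA
  have hsub : A ⊆ Finset.univ.filter fun k : Fin n => (k : ℕ) < (j : ℕ) := by
    intro k hk
    simp only [Finset.mem_filter, Finset.mem_univ, true_and]
    by_contra hlt
    push_neg at hlt
    exact hjA (hdc k hk j (Fin.le_def.mpr hlt))
  have := Finset.card_le_card hsub
  rw [card_filter_val_lt n (j : ℕ) (le_of_lt j.isLt)] at this
  omega

/-- Cuboid decomposition of the budget constraint set.
Assignments `U : Fin dZ → Fin (K+1)` encode levels `1, …, K+1` (value `K` meaning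
"unconstrained"); `U` is maximally relaxed when `#{i : U i ≤ ℓ} = b ℓ` for every level
`ℓ < K`. Then `γ ∈ Γ(τ,b)` iff some maximally relaxed `U` has `|γ_i| ≤ τ_{U i}` for every
`i` with `U i < K`. -/
theorem budgetSet_eq_union_cuboids
    (dZ K : ℕ) (hK : 0 < K) (τ : Fin K → ℝ) (b : Fin K → ℕ)
    (hτ0 : 0 ≤ τ ⟨0, hK⟩) (hτmono : StrictMono τ)
    (hb0 : 0 < b ⟨0, hK⟩) (hbmono : StrictMono b)
    (hbK : b ⟨K - 1, Nat.sub_lt hK one_pos⟩ ≤ dZ) :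
    ∀ γ : Fin dZ → ℝ,
      γ ∈ budgetSet dZ K τ b ↔
        ∃ U : Fin dZ → Fin (K + 1),
          (∀ ℓ : Fin K, Set.ncard {i : Fin dZ | (U i : ℕ) ≤ (ℓ : ℕ)} = b ℓ) ∧
          (∀ i : Fin dZ, ∀ h : (U i : ℕ) < K, |γ i| ≤ τ ⟨(U i : ℕ), h⟩) := by
  intro γ
  classical
  have hbd : ∀ ℓ : Fin K, b ℓ ≤ dZ := by
    intro ℓ
    refine le_trans ?_ hbK
    exact hbmono.monotone (Fin.le_def.mpr (by simp only [Fin.val_mk]; have := ℓ.isLt; omega))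
  constructor
  · intro hγ
    set σ := Tuple.sort (fun i => |γ i|) with hσdef
    have hmono : Monotone ((fun i => |γ i|) ∘ σ) := Tuple.monotone_sort _
    set g : Fin dZ → ℕ :=
      fun i => (Finset.univ.filter fun m : Fin K => ((σ.symm i : ℕ) < b m)).card with hgdef
    -- the key characterization
    have key : ∀ (i : Fin dZ) (ℓ : Fin K), (K - g i ≤ (ℓ : ℕ)) ↔ ((σ.symm i : ℕ) < b ℓ) := by
      intro i ℓ
      have hgi : (Finset.univ.filter fun m : Fin K => ((σ.symm i : ℕ) < b m)).card = g i := rfl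
      constructor
      · intro hle
        by_contra hlt
        push_neg at hlt
        have hsub : (Finset.univ.filter fun m : Fin K => ((σ.symm i : ℕ) < b m))
            ⊆ Finset.Ioi ℓ := by
          intro m hm
          simp only [Finset.mem_filter, Finset.mem_univ, true_and] at hm
          rw [Finset.mem_Ioi]
          by_contra hmle
          push_neg at hmle
          have : b m ≤ b ℓ := hbmono.monotone hmle
          omega
        have := Finset.card_le_card hsub
        rw [Fin.card_Ioi, hgi] at this
        have hℓ := ℓ.isLt
        omega
      · intro hlt
        have hsub : Finset.Ici ℓ
            ⊆ (Finset.univ.filter fun m : Fin K => ((σ.symm i : ℕ) < b m)) := by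
          intro m hm
          rw [Finset.mem_Ici] at hm
          simp only [Finset.mem_filter, Finset.mem_univ, true_and]
          exact lt_of_lt_of_le hlt (hbmono.monotone hm)
        have := Finset.card_le_card hsub
        rw [Fin.card_Ici, hgi] at this
        have hℓ := ℓ.isLt
        omega
    refine ⟨fun i => ⟨K - g i, by omega⟩, ?_, ?_⟩
    · intro ℓ
      have hset : {i : Fin dZ | ((⟨K - g i, by omega⟩ : Fin (K + 1)) : ℕ) ≤ (ℓ : ℕ)}
          = {i : Fin dZ | (σ.symm i : ℕ) < b ℓ} := by
        ext i
        simpa using key i ℓ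
      rw [hset, ncard_setOf_eq_card_filter]
      have hbij : (Finset.univ.filter fun i : Fin dZ => (σ.symm i : ℕ) < b ℓ).card
          = (Finset.univ.filter fun j : Fin dZ => (j : ℕ) < b ℓ).card := by
        apply Finset.card_bij' (fun i _ => σ.symm i) (fun j _ => σ j)
        · intro i hi
          simp only [Finset.mem_filter, Finset.mem_univ, true_and] at hi ⊢
          exact hi
        · intro j hj
          simp only [Finset.mem_filter, Finset.mem_univ, true_and] at hj ⊢
          simpa using hj
        · intro i _; simp
        · intro j _; simp
      rw [hbij, card_filter_val_lt dZ (b ℓ) (hbd ℓ)]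
    · intro i h
      simp only at h
      set ℓ₀ : Fin K := ⟨K - g i, h⟩ with hℓ₀
      have hx : (σ.symm i : ℕ) < b ℓ₀ := (key i ℓ₀).mp (le_refl _)
      have hcard : b ℓ₀ ≤ (Finset.univ.filter fun j : Fin dZ => |γ (σ j)| ≤ τ ℓ₀).card := by
        have h1 := hγ ℓ₀
        rw [ncard_setOf_eq_card_filter] at h1
        have hbij : (Finset.univ.filter fun j : Fin dZ => |γ (σ j)| ≤ τ ℓ₀).card
            = (Finset.univ.filter fun i : Fin dZ => |γ i| ≤ τ ℓ₀).card := by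
          apply Finset.card_bij' (fun j _ => σ j) (fun i _ => σ.symm i)
          · intro j hj
            simp only [Finset.mem_filter, Finset.mem_univ, true_and] at hj ⊢
            exact hj
          · intro j hj
            simp only [Finset.mem_filter, Finset.mem_univ, true_and] at hj ⊢
            simpa using hj
          · intro j _; simp
          · intro j _; simp
        rw [hbij]
        exact h1
      have hmem : σ.symm i ∈ (Finset.univ.filter fun j : Fin dZ => |γ (σ j)| ≤ τ ℓ₀) := by
        refine mem_of_downclosed _ ?_ (b ℓ₀) hcard (σ.symm i) hx
        intro k hk k' hk'
        simp only [Finset.mem_filter, Finset.mem_univ, true_and] at hk ⊢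
        exact le_trans (hmono hk') hk
      simp only [Finset.mem_filter, Finset.mem_univ, true_and, Equiv.apply_symm_apply] at hmem
      exact hmem
  · rintro ⟨U, hcount, hcons⟩
    intro ℓ
    rw [← hcount ℓ]
    apply Set.ncard_le_ncard
    · intro i hi
      simp only [Set.mem_setOf_eq] at hi ⊢
      have hUi : (U i : ℕ) < K := lt_of_le_of_lt hi ℓ.isLt
      calc |γ i| ≤ τ ⟨(U i : ℕ), hUi⟩ := hcons i hUi
        _ ≤ τ ℓ := hτmono.monotone (Fin.le_def.mpr hi)
    · exact Set.toFinite _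
end

section
/- (Characterization of unidentifiability under budget constraints.) Let β_Φ ∈ ℝ^{d_Φ×d_Z} with columns (β_Φ)_i ∈ ℝ^{d_Φ}, β_y ∈ ℝ^{d_Z}, and budget constraints Γ(τ,b). Then the feasible set {θ ∈ ℝ^{d_Φ} : h(θ) ∈ Γ(τ,b)} equals all of ℝ^{d_Φ} if and only if for every ℓ ∈ {1,…,K}, the number of indices i with (β_Φ)_i = 0 and |(β_y)_i| ≤ τ_ℓ is at least b_ℓ. (That is, the causal parameter is completely unidentifiable exactly when the budgets are met by covariance-irrelevant candidate instruments alone.) -/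
/-- A vector avoiding all the hyperplanes given by nonzero columns of `βΦ`. -/
lemma exists_generic_vector (dΦ dZ : ℕ) (βΦ : Matrix (Fin dΦ) (Fin dZ) ℝ) :
    ∃ v : Fin dΦ → ℝ, ∀ i : Fin dZ, (fun j => βΦ j i) ≠ 0 → (∑ j, v j * βΦ j i) ≠ 0 := by
  by_contra hcon
  push_neg at hcon
  set ι := {i : Fin dZ // (fun j => βΦ j i) ≠ 0}
  let f : ι → ((Fin dΦ → ℝ) →ₗ[ℝ] ℝ) := fun i =>
    ∑ j, (βΦ j i.1) • (LinearMap.proj j : (Fin dΦ → ℝ) →ₗ[ℝ] ℝ)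
  have hf : ∀ (i : ι) (v : Fin dΦ → ℝ), f i v = ∑ j, v j * βΦ j i.1 := by
    intro i v
    simp [f, LinearMap.sum_apply, mul_comm]
  have hcov : ⋃ i : ι, ((LinearMap.ker (f i) : Submodule ℝ (Fin dΦ → ℝ)) : Set (Fin dΦ → ℝ))
      = Set.univ := by
    ext v
    simp only [Set.mem_iUnion, Set.mem_univ, iff_true, SetLike.mem_coe, LinearMap.mem_ker]
    obtain ⟨i, hi0, hi⟩ := hcon v
    exact ⟨⟨i, hi0⟩, by rw [hf]; exact hi⟩
  obtain ⟨i, hi⟩ := Subspace.exists_eq_top_of_iUnion_eq_univ hcov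
  have hker : f i = 0 := LinearMap.ker_eq_top.mp hi
  have : ∃ j, βΦ j i.1 ≠ 0 := by
    by_contra hall
    push_neg at hall
    exact i.2 (funext hall)
  obtain ⟨j, hj⟩ := this
  have := hf i (Pi.single j 1)
  rw [hker] at this
  simp only [LinearMap.zero_apply] at this
  rw [Finset.sum_eq_single j (fun k _ hk => by simp [Pi.single_apply, hk])
    (fun h => absurd (Finset.mem_univ j) h)] at this
  simp [Pi.single_apply] at this
  exact hj this.symm

/-- Characterization of unidentifiability under budget constraints:
the feasible set `{θ : h(θ) ∈ Γ(τ,b)}`, with `h(θ)_i = (β_y)_i − ⟨θ, (β_Φ)_i⟩`, equals all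
of `ℝ^{d_Φ}` iff for every level `ℓ`, at least `b ℓ` indices `i` are covariance-irrelevant
(`(β_Φ)_i = 0`) and satisfy `|(β_y)_i| ≤ τ ℓ`. -/
theorem unidentifiability_characterization
    (dΦ dZ K : ℕ) (hK : 0 < K) (τ : Fin K → ℝ) (b : Fin K → ℕ)
    (hτ0 : 0 ≤ τ ⟨0, hK⟩) (hτmono : StrictMono τ)
    (hb0 : 0 < b ⟨0, hK⟩) (hbmono : StrictMono b)
    (hbK : b ⟨K - 1, Nat.sub_lt hK one_pos⟩ ≤ dZ)
    (βΦ : Matrix (Fin dΦ) (Fin dZ) ℝ) (βy : Fin dZ → ℝ) :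
    {θ : Fin dΦ → ℝ |
        (fun i => βy i - ∑ j, θ j * βΦ j i) ∈ budgetSet dZ K τ b} = Set.univ ↔
      ∀ ℓ : Fin K,
        b ℓ ≤ Set.ncard {i : Fin dZ | (fun j => βΦ j i) = 0 ∧ |βy i| ≤ τ ℓ} := by
  set τmax := τ ⟨K - 1, Nat.sub_lt hK one_pos⟩ with hτmax
  have hτle : ∀ ℓ : Fin K, τ ℓ ≤ τmax := by
    intro ℓ
    exact hτmono.monotone (by
      simp only [Fin.le_def]
      omega)
  constructor
  · intro hall ℓ
    obtain ⟨v, hv⟩ := exists_generic_vector dΦ dZ βΦ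
    set d : Fin dZ → ℝ := fun i => ∑ j, v j * βΦ j i with hd
    -- choose t large enough
    obtain ⟨t, ht⟩ := Finset.exists_le
      (Finset.univ.image fun i : Fin dZ => (|βy i| + τmax + 1) / |d i|)
    set θ : Fin dΦ → ℝ := fun j => t * v j with hθ
    have hθmem : θ ∈ {θ : Fin dΦ → ℝ |
        (fun i => βy i - ∑ j, θ j * βΦ j i) ∈ budgetSet dZ K τ b} := by
      rw [hall]; trivial
    have hbig : ∀ i : Fin dZ, (fun j => βΦ j i) ≠ 0 → τ ℓ < |βy i - ∑ j, θ j * βΦ j i| := by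
      intro i hi
      have hdi : d i ≠ 0 := hv i hi
      have hdipos : 0 < |d i| := abs_pos.mpr hdi
      have hti : (|βy i| + τmax + 1) / |d i| ≤ t :=
        ht _ (Finset.mem_image_of_mem _ (Finset.mem_univ i))
      have h1 : |βy i| + τmax + 1 ≤ t * |d i| := (div_le_iff₀ hdipos).mp hti
      have hsum : ∑ j, θ j * βΦ j i = t * d i := by
        rw [hd, Finset.mul_sum]
        exact Finset.sum_congr rfl fun j _ => by ring
      rw [hsum]
      have h2 : t * |d i| - |βy i| ≤ |βy i - t * d i| := by
        have h3 := abs_sub_abs_le_abs_sub (t * d i) (βy i)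
        rw [abs_mul, abs_sub_comm] at h3
        nlinarith [le_abs_self t, abs_nonneg (d i)]
      linarith [hτle ℓ]
    have hsub : {i : Fin dZ | |βy i - ∑ j, θ j * βΦ j i| ≤ τ ℓ} ⊆
        {i : Fin dZ | (fun j => βΦ j i) = 0 ∧ |βy i| ≤ τ ℓ} := by
      intro i hi
      simp only [Set.mem_setOf_eq] at hi ⊢
      by_cases hcol : (fun j => βΦ j i) = 0
      · refine ⟨hcol, ?_⟩
        have : ∑ j, θ j * βΦ j i = 0 := by
          apply Finset.sum_eq_zero
          intro j _
          have : βΦ j i = 0 := congrFun hcol j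
          simp [this]
        rwa [this, sub_zero] at hi
      · exact absurd hi (not_le.mpr (hbig i hcol))
    calc b ℓ ≤ Set.ncard {i : Fin dZ | |βy i - ∑ j, θ j * βΦ j i| ≤ τ ℓ} := hθmem ℓ
      _ ≤ _ := Set.ncard_le_ncard hsub (Set.toFinite _)
  · intro h
    apply Set.eq_univ_iff_forall.mpr
    intro θ ℓ
    have hsub : {i : Fin dZ | (fun j => βΦ j i) = 0 ∧ |βy i| ≤ τ ℓ} ⊆
        {i : Fin dZ | |βy i - ∑ j, θ j * βΦ j i| ≤ τ ℓ} := by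
      intro i hi
      simp only [Set.mem_setOf_eq] at hi ⊢
      obtain ⟨hcol, hy⟩ := hi
      have : ∑ j, θ j * βΦ j i = 0 := by
        apply Finset.sum_eq_zero
        intro j _
        have : βΦ j i = 0 := congrFun hcol j
        simp [this]
      rwa [this, sub_zero]
    calc b ℓ ≤ _ := h ℓ
      _ ≤ _ := Set.ncard_le_ncard hsub (Set.toFinite _)
end

section
/- (Confidence-set rewriting under budget constraints.) Let β_Φ ∈ ℝ^{d_Φ×d_Z} with columns (β_Φ)_i, β̂_y ∈ ℝ^{d_Z}, and δ ∈ ℝ^{d_Z} with δ_i ≥ 0 for all i. Let Σ_b^{(max)} be the set of assignments U : {1,…,d_Z} → {1,…,K+1} with #{i : U(i) ≤ ℓ} = b_ℓ for every ℓ ∈ {1,…,K}. Then the set {θ ∈ ℝ^{d_Φ} : ∃ β_y ∈ ℝ^{d_Z} with |(β_y)_i − (β̂_y)_i| ≤ δ_i for all i, such that the vector (β_y − θᵀβ_Φ) ∈ Γ(τ,b)} equals the union over U ∈ Σ_b^{(max)} of the sets {θ ∈ ℝ^{d_Φ} : for every i with U(i) ≤ K, |(β̂_y)_i − ⟨θ,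 (β_Φ)_i⟩| ≤ τ_{U(i)} + δ_i}. -/
open Finset in
lemma exists_chain {α : Type*} [DecidableEq α] {K : ℕ}
    (A : Fin K → Finset α) (b : Fin K → ℕ)
    (hA : Monotone A) (hb : Monotone b)
    (hcard : ∀ ℓ, b ℓ ≤ (A ℓ).card) :
    ∃ S : Fin K → Finset α, Monotone S ∧ (∀ ℓ, S ℓ ⊆ A ℓ) ∧ ∀ ℓ, (S ℓ).card = b ℓ := by
  classical
  rcases Nat.eq_zero_or_pos K with hK | hK
  · subst hK; exact ⟨fun ℓ => ∅, fun x y _ => subset_rfl, fun ℓ => ℓ.elim0, fun ℓ => ℓ.elim0⟩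
  set ext : Finset α → Finset α → ℕ → Finset α := fun s t n =>
    if h : s ⊆ t ∧ s.card ≤ n ∧ n ≤ t.card then
      (Finset.exists_subsuperset_card_eq h.1 h.2.1 h.2.2).choose else s with hext_def
  have hext : ∀ s t n, s ⊆ t → s.card ≤ n → n ≤ t.card →
      s ⊆ ext s t n ∧ ext s t n ⊆ t ∧ (ext s t n).card = n := by
    intro s t n h1 h2 h3
    have h : s ⊆ t ∧ s.card ≤ n ∧ n ≤ t.card := ⟨h1, h2, h3⟩
    simp only [hext_def, dif_pos h]
    exact (Finset.exists_subsuperset_card_eq h.1 h.2.1 h.2.2).choose_spec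
  set A' : ℕ → Finset α := fun n => if h : n < K then A ⟨n, h⟩ else ∅ with hA'
  set b' : ℕ → ℕ := fun n => if h : n < K then b ⟨n, h⟩ else 0 with hb'
  set S0 : ℕ → Finset α := fun n =>
    Nat.rec (ext ∅ (A' 0) (b' 0)) (fun n prev => ext prev (A' (n + 1)) (b' (n + 1))) n with hS0
  have key : ∀ n (h : n < K),
      (S0 n ⊆ A ⟨n, h⟩ ∧ (S0 n).card = b ⟨n, h⟩) ∧ ∀ m, m ≤ n → S0 m ⊆ S0 n := by
    intro n
    induction n with
    | zero =>
      intro h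
      have hA0 : A' 0 = A ⟨0, h⟩ := by simp [hA', h]
      have hb0 : b' 0 = b ⟨0, h⟩ := by simp [hb', h]
      have := hext ∅ (A' 0) (b' 0) (Finset.empty_subset _)
        (by simp) (by rw [hA0, hb0]; exact hcard _)
      refine ⟨⟨?_, ?_⟩, ?_⟩
      · rw [← hA0]; exact this.2.1
      · rw [← hb0]; exact this.2.2
      · intro m hm; interval_cases m; exact subset_rfl
    | succ n ih =>
      intro h
      have hn : n < K := Nat.lt_of_succ_lt h
      obtain ⟨⟨hsub, hcardn⟩, hmono⟩ := ih hn
      have hAn : A' (n + 1) = A ⟨n + 1, h⟩ := by simp [hA', h]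
      have hbn : b' (n + 1) = b ⟨n + 1, h⟩ := by simp [hb', h]
      have hle : (⟨n, hn⟩ : Fin K) ≤ ⟨n + 1, h⟩ := by simp [Fin.le_def]
      have h1 : S0 n ⊆ A' (n + 1) := by
        rw [hAn]; exact hsub.trans (hA hle)
      have h2 : (S0 n).card ≤ b' (n + 1) := by
        rw [hbn, hcardn]; exact hb hle
      have h3 : b' (n + 1) ≤ (A' (n + 1)).card := by rw [hAn, hbn]; exact hcard _
      have this := hext (S0 n) (A' (n + 1)) (b' (n + 1)) h1 h2 h3
      have hstep : S0 (n + 1) = ext (S0 n) (A' (n + 1)) (b' (n + 1)) := rfl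
      refine ⟨⟨?_, ?_⟩, ?_⟩
      · rw [hstep, ← hAn]; exact this.2.1
      · rw [hstep, ← hbn]; exact this.2.2
      · intro m hm
        rcases Nat.lt_or_ge m (n + 1) with hm' | hm'
        · exact (hmono m (Nat.lt_succ_iff.mp hm')).trans (hstep ▸ this.1)
        · have : m = n + 1 := le_antisymm hm hm'
          subst this; exact subset_rfl
  refine ⟨fun ℓ => S0 ℓ.val, ?_, ?_, ?_⟩
  · intro x y hxy
    exact ((key y.val y.isLt).2 x.val hxy)
  · intro ℓ
    have := ((key ℓ.val ℓ.isLt).1).1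
    simpa using this
  · intro ℓ
    have := ((key ℓ.val ℓ.isLt).1).2
    simpa using this

/-- Confidence-set rewriting under budget constraints.
Assignments `U : Fin dZ → Fin (K+1)` encode levels `1, …, K+1` (value `K` meaning
"unconstrained"); `U` is maximally relaxed when `#{i : U i ≤ ℓ} = b ℓ` for all `ℓ < K`.
The set of `θ` for which some `β_y` within the box `|(β_y)_i − (β̂_y)_i| ≤ δ_i` has residual
vector `β_y − θᵀβ_Φ ∈ Γ(τ,b)` equals the union over maximally relaxed `U` of the sets
`{θ : ∀ i with U i < K, |(β̂_y)_i − ⟨θ, (β_Φ)_i⟩| ≤ τ_{U i} + δ_i}`. -/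
theorem confidence_set_rewriting
    (dΦ dZ K : ℕ) (hK : 0 < K) (τ : Fin K → ℝ) (b : Fin K → ℕ)
    (hτ0 : 0 ≤ τ ⟨0, hK⟩) (hτmono : StrictMono τ)
    (hb0 : 0 < b ⟨0, hK⟩) (hbmono : StrictMono b)
    (hbK : b ⟨K - 1, Nat.sub_lt hK one_pos⟩ ≤ dZ)
    (βΦ : Matrix (Fin dΦ) (Fin dZ) ℝ) (βyhat : Fin dZ → ℝ)
    (δ : Fin dZ → ℝ) (hδ : ∀ i, 0 ≤ δ i) :
    {θ : Fin dΦ → ℝ | ∃ βy : Fin dZ → ℝ,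
        (∀ i, |βy i - βyhat i| ≤ δ i) ∧
        (fun i => βy i - ∑ j, θ j * βΦ j i) ∈ budgetSet dZ K τ b} =
      ⋃ U ∈ {U : Fin dZ → Fin (K + 1) |
          ∀ ℓ : Fin K, Set.ncard {i : Fin dZ | (U i : ℕ) ≤ (ℓ : ℕ)} = b ℓ},
        {θ : Fin dΦ → ℝ | ∀ i : Fin dZ, ∀ h : (U i : ℕ) < K,
          |βyhat i - ∑ j, θ j * βΦ j i| ≤ τ ⟨(U i : ℕ), h⟩ + δ i} := by
  classical
  have hτ : ∀ ℓ, 0 ≤ τ ℓ := fun ℓ =>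
    hτ0.trans (hτmono.monotone (show (⟨0, hK⟩ : Fin K) ≤ ℓ from Nat.zero_le _))
  ext θ
  set s : Fin dZ → ℝ := fun i => ∑ j, θ j * βΦ j i with hs
  simp only [Set.mem_setOf_eq, Set.mem_iUnion, budgetSet]
  constructor
  · rintro ⟨βy, hbox, hbud⟩
    set γ : Fin dZ → ℝ := fun i => βy i - s i with hγ
    have hbud' : ∀ ℓ : Fin K, b ℓ ≤ (Finset.univ.filter (fun i => |γ i| ≤ τ ℓ)).card := by
      intro ℓ
      have h1 := hbud ℓ
      have h2 : {i : Fin dZ | |γ i| ≤ τ ℓ}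
          = ↑(Finset.univ.filter (fun i => |γ i| ≤ τ ℓ)) := by
        ext i; simp
      rw [h2, Set.ncard_coe_finset] at h1
      exact h1
    set A : Fin K → Finset (Fin dZ) :=
      fun ℓ => Finset.univ.filter (fun i => |γ i| ≤ τ ℓ) with hA
    have hAmono : Monotone A := by
      intro x y hxy i hi
      simp only [hA, Finset.mem_filter, Finset.mem_univ, true_and] at hi ⊢
      exact hi.trans (hτmono.monotone hxy)
    obtain ⟨S, hSmono, hSsub, hScard⟩ := exists_chain A b hAmono hbmono.monotone hbud'
    set U : Fin dZ → Fin (K + 1) := fun i =>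
      if h : ∃ n, ∃ hn : n < K, i ∈ S ⟨n, hn⟩ then
        ⟨Nat.find h, Nat.lt_succ_of_lt (Nat.find_spec h).choose⟩
      else ⟨K, Nat.lt_succ_self K⟩ with hUdef
    have hUmem : ∀ (i : Fin dZ) (ℓ : Fin K), ((U i : ℕ) ≤ (ℓ : ℕ) ↔ i ∈ S ℓ) := by
      intro i ℓ
      constructor
      · intro hle
        by_cases h : ∃ n, ∃ hn : n < K, i ∈ S ⟨n, hn⟩
        · obtain ⟨hfk, hmem⟩ := Nat.find_spec h
          have hval : (U i : ℕ) = Nat.find h := by simp [hUdef, dif_pos h]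
          rw [hval] at hle
          have : (⟨Nat.find h, hfk⟩ : Fin K) ≤ ℓ := hle
          have := hSmono this hmem
          exact this
        · have hval : (U i : ℕ) = K := by simp [hUdef, dif_neg h]
          rw [hval] at hle
          exact absurd (lt_of_le_of_lt hle ℓ.isLt) (lt_irrefl K)
      · intro hmem
        have h : ∃ n, ∃ hn : n < K, i ∈ S ⟨n, hn⟩ := ⟨ℓ.val, ℓ.isLt, by simpa using hmem⟩
        have hval : (U i : ℕ) = Nat.find h := by simp [hUdef, dif_pos h]
        rw [hval]
        exact Nat.find_le ⟨ℓ.isLt, by simpa using hmem⟩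
    refine ⟨U, ?_, ?_⟩
    · intro ℓ
      have h2 : {i : Fin dZ | (U i : ℕ) ≤ (ℓ : ℕ)} = ↑(S ℓ) := by
        ext i; simpa using hUmem i ℓ
      rw [h2, Set.ncard_coe_finset, hScard]
    · intro i h
      have hex : ∃ n, ∃ hn : n < K, i ∈ S ⟨n, hn⟩ := by
        by_contra hc
        have : (U i : ℕ) = K := by simp [hUdef, dif_neg hc]
        omega
      obtain ⟨hfk, hmem⟩ := Nat.find_spec hex
      have hval : (U i : ℕ) = Nat.find hex := by simp [hUdef, dif_pos hex]
      have hγi : |γ i| ≤ τ ⟨Nat.find hex, hfk⟩ := by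
        have := hSsub _ hmem
        simp only [hA, Finset.mem_filter, Finset.mem_univ, true_and] at this
        exact this
      have heq : τ ⟨(U i : ℕ), h⟩ = τ ⟨Nat.find hex, hfk⟩ := by
        congr 1
        exact Fin.ext hval
      rw [heq]
      have habs : |βyhat i - s i| ≤ |βyhat i - βy i| + |βy i - s i| := abs_sub_le _ _ _
      have h1 : |βyhat i - βy i| ≤ δ i := by rw [abs_sub_comm]; exact hbox i
      have h2 : |βy i - s i| ≤ τ ⟨Nat.find hex, hfk⟩ := hγi
      linarith
  · rintro ⟨U, hU, hθ⟩
    refine ⟨fun i => if h : (U i : ℕ) < K then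
        s i + max (-(τ ⟨(U i : ℕ), h⟩)) (min (τ ⟨(U i : ℕ), h⟩) (βyhat i - s i))
      else βyhat i, ?_, ?_⟩
    · intro i
      by_cases h : (U i : ℕ) < K
      · simp only [dif_pos h]
        set t := τ ⟨(U i : ℕ), h⟩ with ht
        set r := βyhat i - s i with hr
        obtain ⟨hr1, hr2⟩ := abs_le.mp (hθ i h)
        have key : s i + max (-t) (min t r) - βyhat i = max (-t) (min t r) - r := by
          rw [hr]; ring
        rw [key, abs_le]
        constructor
        · have hmin : r - δ i ≤ min t r := le_min (by linarith) (by linarith [hδ i])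
          have := le_max_right (-t) (min t r)
          linarith
        · have h1 : -t ≤ r + δ i := by linarith
          have h2 : min t r ≤ r + δ i := (min_le_right _ _).trans (by linarith [hδ i])
          have := max_le h1 h2
          linarith
      · simp only [dif_neg h]
        simpa using hδ i
    · intro ℓ
      rw [← hU ℓ]
      apply Set.ncard_le_ncard _ (Set.toFinite _)
      intro i hi
      simp only [Set.mem_setOf_eq] at hi ⊢
      have h : (U i : ℕ) < K := lt_of_le_of_lt hi ℓ.isLt
      simp only [dif_pos h]
      set t := τ ⟨(U i : ℕ), h⟩ with ht
      have hts : t ≤ τ ℓ := hτmono.monotone (show (⟨(U i : ℕ), h⟩ : Fin K) ≤ ℓ from hi)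
      have ht0 : 0 ≤ t := hτ _
      have key : s i + max (-t) (min t (βyhat i - s i)) - s i
          = max (-t) (min t (βyhat i - s i)) := by ring
      rw [key, abs_le]
      constructor
      · have := le_max_left (-t) (min t (βyhat i - s i))
        linarith
      · have := max_le (by linarith : -t ≤ t) (min_le_left t (βyhat i - s i))
        linarith
end
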